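/- For every real α > 0, the integral over ℝ² of 2α² · (|y|^{α-2}/(1+|y|^α)²) · ((1 - |y|^α)/(1 + |y|^α)) · ln|y| equals -4π. -/

import Mathlib

open Real MeasureTheory

theorem stmt_4 (α : ℝ) (hα : 0 < α) :
    ∫ y : EuclideanSpace ℝ (Fin 2),
      2 * α ^ 2 * (‖y‖ ^ (α - 2) / (1 + ‖y‖ ^ α) ^ 2) * ((1 - ‖y‖ ^ α) / (1 + ‖y‖ ^ α))
        * Real.log ‖y‖
      = -(4 * π) := by
  set f : ℝ → ℝ := fun r =>
    2 * α ^ 2 * (r ^ (α - 2) / (1 + r ^ α) ^ 2) * ((1 - r ^ α) / (1 + r ^ α)) * Real.log r with hf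
  set F : ℝ → ℝ := fun r => 2 * α * (r ^ α * Real.log r) / (1 + r ^ α) ^ 2 + 2 / (1 + r ^ α)
    with hF
  have hFzero : F 0 = 2 := by
    simp [hF, Real.zero_rpow hα.ne']
  -- positivity of denominators
  have hden : ∀ x : ℝ, 0 < x → (0:ℝ) < 1 + x ^ α := fun x hx => by positivity
  -- derivative
  have hderiv : ∀ x ∈ Set.Ioi (0:ℝ), HasDerivAt F (x ^ (2-1) • f x) x := by
    intro x hx
    have hx0 : (0:ℝ) < x := hx
    have hd : (0:ℝ) < 1 + x ^ α := hden x hx0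
    have hu : HasDerivAt (fun y : ℝ => y ^ α) (α * x ^ (α - 1)) x :=
      Real.hasDerivAt_rpow_const (Or.inl hx0.ne')
    have hlog : HasDerivAt Real.log x⁻¹ x := Real.hasDerivAt_log hx0.ne'
    have h1 : HasDerivAt (fun y : ℝ => y ^ α * Real.log y)
        (α * x ^ (α - 1) * Real.log x + x ^ α * x⁻¹) x := hu.mul hlog
    have hden1 : HasDerivAt (fun y : ℝ => 1 + y ^ α) (α * x ^ (α - 1)) x := by
      exact hu.const_add 1
    have hden2 : HasDerivAt (fun y : ℝ => (1 + y ^ α) ^ 2)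
        (2 * (1 + x ^ α) ^ 1 * (α * x ^ (α - 1))) x := hden1.pow 2
    have hA : HasDerivAt (fun y : ℝ => 2 * α * (y ^ α * Real.log y) / (1 + y ^ α) ^ 2)
        ((2 * α * (α * x ^ (α - 1) * Real.log x + x ^ α * x⁻¹) * (1 + x ^ α) ^ 2 -
          2 * α * (x ^ α * Real.log x) * (2 * (1 + x ^ α) ^ 1 * (α * x ^ (α - 1)))) /
          ((1 + x ^ α) ^ 2) ^ 2) x := (h1.const_mul (2*α)).div hden2 (by positivity)
    have hB : HasDerivAt (fun y : ℝ => 2 / (1 + y ^ α))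
        ((0 * (1 + x ^ α) - 2 * (α * x ^ (α - 1))) / (1 + x ^ α) ^ 2) x :=
      (hasDerivAt_const x (2:ℝ)).div hden1 hd.ne'
    have := hA.add hB
    refine this.congr_deriv ?_
    have e1 : x ^ (α - 1) = x ^ α / x := by
      rw [Real.rpow_sub hx0, Real.rpow_one]
    have e2 : x ^ (α - 2) = x ^ α / x ^ 2 := by
      rw [Real.rpow_sub hx0, show (2:ℝ) = ((2:ℕ):ℝ) by norm_num, Real.rpow_natCast]
    rw [hf]
    simp only [e1, e2]
    have hx2 : x ^ (2 - 1) = x := pow_one x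
    rw [hx2]
    rw [smul_eq_mul]
    field_simp
    ring
  -- nonpositivity
  have hnonpos : ∀ x ∈ Set.Ioi (0:ℝ), x ^ (2-1) • f x ≤ 0 := by
    intro x hx
    have hx0 : (0:ℝ) < x := hx
    have hd : (0:ℝ) < 1 + x ^ α := hden x hx0
    have key : (1 - x ^ α) * Real.log x ≤ 0 := by
      rcases le_total x 1 with h1 | h1
      · apply mul_nonpos_of_nonneg_of_nonpos
        · have : x ^ α ≤ 1 := Real.rpow_le_one hx0.le h1 hα.le
          linarith
        · exact Real.log_nonpos hx0.le h1
      · apply mul_nonpos_of_nonpos_of_nonneg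
        · have : 1 ≤ x ^ α := Real.one_le_rpow h1 hα.le
          linarith
        · exact Real.log_nonneg h1
    have hd' : (1 + x ^ α) ≠ 0 := hd.ne'
    have : x ^ (2-1) • f x =
        (x * (2 * α ^ 2) * x ^ (α - 2) / ((1 + x ^ α) ^ 2 * (1 + x ^ α))) *
          ((1 - x ^ α) * Real.log x) := by
      rw [hf]; simp only [pow_one, smul_eq_mul]
      field_simp
      ring
    rw [this]
    exact mul_nonpos_of_nonneg_of_nonpos (by positivity) key
  -- continuity at 0 from the right
  have hcont : ContinuousWithinAt F (Set.Ici 0) 0 := by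
    rw [← continuousWithinAt_Ioi_iff_Ici]
    have h1 : Filter.Tendsto (fun x : ℝ => x ^ α * Real.log x) (nhdsWithin 0 (Set.Ioi 0))
        (nhds 0) := by
      have := tendsto_log_mul_rpow_nhdsGT_zero hα
      simpa [mul_comm] using this
    have h2 : Filter.Tendsto (fun x : ℝ => x ^ α) (nhdsWithin 0 (Set.Ioi 0)) (nhds 0) := by
      have h : ContinuousAt (fun x : ℝ => x ^ α) 0 :=
        Real.continuousAt_rpow_const 0 α (Or.inr hα.le)
      have h' : Filter.Tendsto (fun x : ℝ => x ^ α) (nhdsWithin 0 (Set.Ioi 0))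
          (nhds ((0:ℝ) ^ α)) := (h.continuousWithinAt (s := Set.Ioi 0))
      rwa [Real.zero_rpow hα.ne'] at h'
    have hA : Filter.Tendsto (fun x : ℝ => 2 * α * (x ^ α * Real.log x) / (1 + x ^ α) ^ 2)
        (nhdsWithin 0 (Set.Ioi 0)) (nhds 0) := by
      have := (h1.const_mul (2*α)).div
        (((tendsto_const_nhds (x := (1:ℝ))).add h2).pow 2) (by norm_num)
      simpa [Pi.div_def] using this
    have hB : Filter.Tendsto (fun x : ℝ => 2 / (1 + x ^ α))
        (nhdsWithin 0 (Set.Ioi 0)) (nhds 2) := by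
      have := (tendsto_const_nhds (x := (2:ℝ))).div
        ((tendsto_const_nhds (x := (1:ℝ))).add h2) (by norm_num)
      simpa [Pi.div_def] using this
    have hS : Filter.Tendsto F (nhdsWithin 0 (Set.Ioi 0)) (nhds 2) := by
      simpa using hA.add hB
    show Filter.Tendsto F (nhdsWithin 0 (Set.Ioi 0)) (nhds (F 0))
    rw [hFzero]; exact hS
  -- limit at infinity
  have htop : Filter.Tendsto F Filter.atTop (nhds 0) := by
    have hT : Filter.Tendsto (fun x : ℝ => x ^ α) Filter.atTop Filter.atTop :=
      tendsto_rpow_atTop hα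
    have hinv : Filter.Tendsto (fun x : ℝ => (1 + x ^ α)⁻¹) Filter.atTop (nhds 0) :=
      (Filter.tendsto_atTop_add_const_left _ 1 hT).inv_tendsto_atTop
    have hldiv : Filter.Tendsto (fun x : ℝ => Real.log x / x ^ α) Filter.atTop (nhds 0) :=
      (isLittleO_log_rpow_atTop hα).tendsto_div_nhds_zero
    have hratio : Filter.Tendsto (fun x : ℝ => x ^ α / (1 + x ^ α)) Filter.atTop (nhds 1) := by
      have := (tendsto_const_nhds (x := (1:ℝ))).sub hinv
      rw [sub_zero] at this
      apply this.congr'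
      filter_upwards [Filter.eventually_ge_atTop (1:ℝ)] with x hx
      have hx0 : (0:ℝ) < x := lt_of_lt_of_le one_pos hx
      have hd : (0:ℝ) < 1 + x ^ α := hden x hx0
      field_simp
      ring
    have hterm1 : Filter.Tendsto (fun x : ℝ => 2 * α * (x ^ α * Real.log x) / (1 + x ^ α) ^ 2)
        Filter.atTop (nhds 0) := by
      have := ((hldiv.const_mul (2*α)).mul (hratio.pow 2))
      rw [mul_zero, zero_mul] at this
      apply this.congr'
      filter_upwards [Filter.eventually_ge_atTop (1:ℝ)] with x hx
      have hx0 : (0:ℝ) < x := lt_of_lt_of_le one_pos hx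
      have hxa : (0:ℝ) < x ^ α := Real.rpow_pos_of_pos hx0 α
      have hd : (0:ℝ) < 1 + x ^ α := hden x hx0
      field_simp
    have hterm2 : Filter.Tendsto (fun x : ℝ => 2 / (1 + x ^ α)) Filter.atTop (nhds 0) := by
      have := hinv.const_mul (2:ℝ)
      rw [mul_zero] at this
      simpa [div_eq_mul_inv] using this
    have := hterm1.add hterm2
    rw [add_zero] at this
    exact this
  -- radial integral
  have hrad : ∫ y in Set.Ioi (0:ℝ), y ^ (2-1) • f y = -2 := by
    rw [integral_Ioi_of_hasDerivAt_of_nonpos hcont hderiv hnonpos htop, hFzero]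
    norm_num
  -- put together
  rw [MeasureTheory.integral_fun_norm_addHaar (volume : Measure (EuclideanSpace ℝ (Fin 2))) f]
  rw [finrank_euclideanSpace_fin]
  rw [hrad]
  have hball : (volume (Metric.ball (0 : EuclideanSpace ℝ (Fin 2)) 1)).toReal = π := by
    rw [EuclideanSpace.volume_ball]
    norm_num [Real.sq_sqrt Real.pi_pos.le, Real.Gamma_two,
      ENNReal.toReal_ofReal Real.pi_pos.le]
  rw [measureReal_def, hball]
  simp
  ring
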